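/- Let α be a finite type of (finished) tasks, let r be a binary relation on α, and let b, e : α → ℝ with b T ≤ e T for all T and with r T τ implying e T < b τ. Then there exists a serial order of the tasks consistent with all precedence constraints: there is a list l : List α that contains every task exactly once (l is a permutation of the full enumeration of α, i.e., l.Nodup and every element of α is a member of l) such that whenever r T τ holds, T occurs strictly earlier than τ in l. Hence the concurrent execution of the finished tasks is equivalent to executing them serially in the order given by l. -/

import Mathlib

/-! Precedence along `r` forces the validity intervals to start in increasing order:
`r T τ` gives `b T ≤ e T < b τ`. Hence listing the tasks by increasing start time `b`
is a serial order respecting every precedence constraint. -/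

namespace List

variable {α β : Type*} [LinearOrder β]

theorem idxOf_lt_idxOf_of_pairwise_le [DecidableEq α] (f : α → β) {l : List α}
    (hl : l.Pairwise (fun x y => f x ≤ f y)) {x y : α} (hx : x ∈ l) (hy : y ∈ l)
    (hxy : f x < f y) : l.idxOf x < l.idxOf y := by
  induction l with
  | nil => simp at hx
  | cons a l ih =>
    obtain ⟨ha, hl⟩ := pairwise_cons.mp hl
    have hya : a ≠ y := by
      rintro rfl
      rcases mem_cons.mp hx with rfl | hx
      · exact lt_irrefl _ hxy
      · exact (ha x hx).not_gt hxy
    rw [idxOf_cons_ne l hya]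
    by_cases hxa : a = x
    · rw [idxOf_cons_eq l hxa]
      exact Nat.succ_pos _
    · rw [idxOf_cons_ne l hxa]
      exact Nat.succ_lt_succ <| ih hl ((mem_cons.mp hx).resolve_left (Ne.symm hxa))
        ((mem_cons.mp hy).resolve_left hya.symm)

theorem exists_nodup_forall_mem_pairwise_le [Fintype α] (f : α → β) :
    ∃ l : List α, l.Nodup ∧ (∀ x, x ∈ l) ∧ l.Pairwise (fun x y => f x ≤ f y) := by
  let sorted := (Finset.univ.toList (α := α)).mergeSort (fun x y => decide (f x ≤ f y))
  have hperm : sorted.Perm Finset.univ.toList := mergeSort_perm _ _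
  refine ⟨sorted, hperm.nodup_iff.mpr (Finset.nodup_toList _),
    fun x => hperm.mem_iff.mpr (Finset.mem_toList.mpr (Finset.mem_univ x)), ?_⟩
  simpa using pairwise_mergeSort (le := fun x y => decide (f x ≤ f y))
    (fun _ _ _ hxy hyz => by simpa using (of_decide_eq_true hxy).trans (of_decide_eq_true hyz))
    (fun x y => by simpa using le_total (f x) (f y)) Finset.univ.toList

end List

/-- For a finite set of finished tasks with nonempty validity intervals that
are separated along precedence arcs, there is a serial order consistent with
all precedence constraints: a duplicate-free list `l` containing every task,
in which `T` occurs strictly earlier than `τ` whenever `r T τ`. -/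
theorem exists_serial_order {α : Type*} [Fintype α] [DecidableEq α]
    (r : α → α → Prop) (b e : α → ℝ)
    (hne : ∀ T, b T ≤ e T) (hsep : ∀ T τ, r T τ → e T < b τ) :
    ∃ l : List α, l.Nodup ∧ (∀ T : α, T ∈ l) ∧
      ∀ T τ : α, r T τ → l.idxOf T < l.idxOf τ := by
  obtain ⟨l, hnodup, hmem, hsorted⟩ := List.exists_nodup_forall_mem_pairwise_le b
  exact ⟨l, hnodup, hmem, fun T τ hr =>
    List.idxOf_lt_idxOf_of_pairwise_le b hsorted (hmem T) (hmem τ)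
      ((hne T).trans_lt (hsep T τ hr))⟩
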